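/- arXiv:math/0610414 — 2 statements merged into one kernel-verified Lean document; each statement's English description precedes it below -/
import Mathlib

section
/- Let n be a natural number and let ℓ > 2 be a natural number. The set of conjugacy class sums X_ℓ(n) = {s_i : 1 ≤ i ≤ n, ℓ does not divide i} ∪ {s_{(ℓj−1,2)} : j ≥ 1, 1 < ℓj < n} generates the center Z(ℚ[S_n]) of the group algebra ℚ[S_n] as a ℚ-algebra. -/
/-- `classSum n m` is the sum, in the group algebra `ℚ[Sₙ]`, of all permutations
whose cycle type is the multiset `m` (parts of size 1 being suppressed, as in
Mathlib's `Equiv.Perm.cycleType`). -/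
noncomputable def classSum (n : ℕ) (m : Multiset ℕ) : MonoidAlgebra ℚ (Equiv.Perm (Fin n)) :=
  ∑ σ ∈ Finset.univ.filter (fun σ : Equiv.Perm (Fin n) => σ.cycleType = m),
    MonoidAlgebra.single σ (1 : ℚ)

/-- The cycle sum `sᵢ`: the sum of all `i`-cycles in `Sₙ` for `i ≥ 2`, and the
identity of `ℚ[Sₙ]` for `i ≤ 1`. -/
noncomputable def cycleSum (n i : ℕ) : MonoidAlgebra ℚ (Equiv.Perm (Fin n)) :=
  if i < 2 then 1 else classSum n {i}

/-!
A central element of `ℚ[Sₙ]` is a combination of class sums, so it suffices to obtain the class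
sum of the cycle type of every `g`, by induction on `|supp g|`. The product `s_μ s_ν` is a
combination of the class sums of the products `στ` with `σ` of type `μ` and `τ` of type `ν`, each
occurring with positive coefficient; the disjoint ones have type `μ + ν`, the others have support
smaller than `|μ| + |ν|`. So the class sum of `g` comes from those of its cycle factors when `g` is
not a cycle, and an `a`-cycle with `ℓ ∤ a` is a generator. For `ℓ ∣ a`, a transposition times an
`(a-1)`-cycle is an `a`-cycle, or a disjoint product of type `(a-1, 2)` (then `a < n`, and
`s_{(a-1,2)}` is a generator), or has support of size at most `a - 1`; hence `s₂ s_{a-1}` yields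
`s_a`.
-/

open Equiv Finset MonoidAlgebra

theorem List.Nodup.cycleType_formPerm {α : Type*} [DecidableEq α] [Fintype α] {l : List α}
    (hl : l.Nodup) (hn : 2 ≤ l.length) : l.formPerm.cycleType = {l.length} := by
  rw [(List.isCycle_formPerm hl hn).cycleType, List.support_formPerm_of_nodup l hl,
    List.toFinset_card_of_nodup hl]
  rintro x rfl
  simp at hn

namespace Equiv.Perm

variable {α : Type*} [DecidableEq α] [Fintype α]

theorem card_support_mul_lt_of_not_disjoint {σ τ : Perm α} (h : ¬ σ.Disjoint τ) :
    #(σ * τ).support < #σ.support + #τ.support := by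
  rw [disjoint_iff_disjoint_support, not_disjoint_iff_nonempty_inter] at h
  calc #(σ * τ).support ≤ #(σ.support ∪ τ.support) := card_le_card (support_mul_le σ τ)
    _ < #(σ.support ∪ τ.support) + #(σ.support ∩ τ.support) := by simpa using h.card_pos
    _ = #σ.support + #τ.support := card_union_add_card_inter _ _

theorem toList_eq_cons_cons {p : Perm α} {x : α} (hx : x ∈ p.support) :
    toList p x = x :: p x :: List.iterate p (p (p x)) (#(p.cycleOf x).support - 2) := by
  have : 2 ≤ #(p.cycleOf x).support := by simpa using hx
  rw [toList, ← Nat.sub_add_cancel this]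
  simp [List.iterate]

theorem IsCycle.formPerm_toList {p : Perm α} (hp : p.IsCycle) {x : α} (hx : x ∈ p.support) :
    (toList p x).formPerm = p := by
  rw [Equiv.Perm.formPerm_toList, hp.cycleOf_eq (mem_support.mp hx)]

theorem IsCycle.length_toList {p : Perm α} (hp : p.IsCycle) {x : α} (hx : x ∈ p.support) :
    (toList p x).length = #p.support := by
  rw [Equiv.Perm.length_toList, hp.cycleOf_eq (mem_support.mp hx)]

theorem IsCycle.cycleType_swap_mul {τ : Perm α} (hτ : τ.IsCycle) {u v : α} (hu : u ∈ τ.support)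
    (hv : v ∉ τ.support) : (swap v u * τ).cycleType = {#τ.support + 1} := by
  obtain ⟨t, ht⟩ : ∃ t, toList τ u = u :: t := ⟨_, toList_eq_cons_cons hu⟩
  have hnodup : (v :: u :: t).Nodup := by
    rw [List.nodup_cons, ← ht, mem_toList_iff]
    exact ⟨fun h => hv (h.1.mem_support_iff.mp hu), nodup_toList τ u⟩
  have hlen : (u :: t).length = #τ.support := by rw [← ht, hτ.length_toList hu]
  have hform : swap v u * τ = (v :: u :: t).formPerm := by
    rw [List.formPerm_cons_cons, ← ht, hτ.formPerm_toList hu]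
  rw [hform, hnodup.cycleType_formPerm (by simp), List.length_cons, hlen]

theorem IsCycle.exists_swap_mul_eq {g : Perm α} (hg : g.IsCycle) (h3 : 3 ≤ #g.support) :
    ∃ σ τ : Perm α, σ.cycleType = {2} ∧ τ.cycleType = {#g.support - 1} ∧ σ * τ = g := by
  obtain ⟨x, hx⟩ := hg.nonempty_support
  have hgx : x ≠ g x := (mem_support.mp hx).symm
  obtain ⟨t, ht⟩ : ∃ t, toList g x = x :: g x :: t := ⟨_, toList_eq_cons_cons hx⟩
  have hnodup := nodup_toList g x
  have hlen := hg.length_toList hx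
  rw [ht] at hnodup hlen
  refine ⟨swap x (g x), (g x :: t).formPerm, ?_, ?_, ?_⟩
  · rw [(isCycle_swap hgx).cycleType, card_support_swap hgx]
  · rw [hnodup.of_cons.cycleType_formPerm (by simp only [List.length_cons] at hlen ⊢; omega),
      ← hlen]
    rfl
  · rw [← List.formPerm_cons_cons, ← ht, hg.formPerm_toList hx]

theorem IsSwap.disjoint_or_cycleType_mul_or_card_support_mul_le {σ τ : Perm α} (hσ : σ.IsSwap)
    (hτ : τ.IsCycle) :
    σ.Disjoint τ ∨ (σ * τ).cycleType = {#τ.support + 1} ∨ #(σ * τ).support ≤ #τ.support := by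
  obtain ⟨u, v, huv, rfl⟩ := hσ
  by_cases hu : u ∈ τ.support <;> by_cases hv : v ∈ τ.support
  · refine .inr (.inr (card_le_card ((support_mul_le _ _).trans ?_)))
    simp [support_swap huv, insert_subset_iff, hu, hv]
  · exact .inr (.inl (swap_comm u v ▸ hτ.cycleType_swap_mul hu hv))
  · exact .inr (.inl (hτ.cycleType_swap_mul hv hu))
  · refine .inl ?_
    simp [disjoint_iff_disjoint_support, support_swap huv, hu, hv]

theorem exists_disjoint_mul_eq_of_not_isCycle {g : Perm α} (h1 : g ≠ 1) (hg : ¬ g.IsCycle) :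
    ∃ f h : Perm α, f.Disjoint h ∧ f ≠ 1 ∧ h ≠ 1 ∧ f * h = g := by
  obtain ⟨f, hf⟩ : g.cycleFactorsFinset.Nonempty := by
    rw [nonempty_iff_ne_empty, Ne, cycleFactorsFinset_eq_empty_iff]
    exact h1
  have hfg := disjoint_mul_inv_of_mem_cycleFactorsFinset hf
  have hf_cycle := (mem_cycleFactorsFinset_iff.mp hf).1
  refine ⟨f, g * f⁻¹, hfg.symm, hf_cycle.ne_one, fun h => ?_, ?_⟩
  · rw [mul_inv_eq_one] at h
    exact hg (h ▸ hf_cycle)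
  · rw [← hfg.commute.eq, inv_mul_cancel_right]

end Equiv.Perm

namespace MonoidAlgebra

theorem univ_sum_coeff_smul_single {R G : Type*} [Semiring R] [Fintype G] (x : MonoidAlgebra R G) :
    ∑ g, x.coeff g • single g (1 : R) = x := by
  classical
  ext g
  simp [coeff_sum]

variable {R : Type*} [CommSemiring R]

theorem coeff_conj_of_mem_center {G : Type*} [Group G] {x : MonoidAlgebra R G}
    (hx : x ∈ Subalgebra.center R _) (g σ : G) : x.coeff (g * σ * g⁻¹) = x.coeff σ := by
  have h := congr_arg (fun y => y.coeff (g * σ)) (Subalgebra.mem_center_iff.mp hx (single g 1))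
  simp only [coeff_single_mul_apply, coeff_mul_single_apply, one_mul, mul_one,
    inv_mul_cancel_left] at h
  exact h.symm

theorem coeff_eq_of_cycleType_eq {α : Type*} [DecidableEq α] [Fintype α]
    {x : MonoidAlgebra R (Perm α)} (hx : x ∈ Subalgebra.center R _) {σ τ : Perm α}
    (h : σ.cycleType = τ.cycleType) : x.coeff σ = x.coeff τ := by
  obtain ⟨g, rfl⟩ := isConj_iff.mp (Perm.isConj_of_cycleType_eq h)
  exact (coeff_conj_of_mem_center hx g σ).symm

end MonoidAlgebra

variable {n : ℕ}

theorem classSum_coeff (m : Multiset ℕ) (ρ : Perm (Fin n)) :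
    (classSum n m).coeff ρ = if ρ.cycleType = m then 1 else 0 := by
  classical
  simp [classSum, coeff_sum, Finsupp.single_apply, sum_ite_eq']

theorem classSum_zero : classSum n 0 = 1 := by
  ext ρ
  rw [classSum_coeff, MonoidAlgebra.one_def, coeff_single, Finsupp.single_apply]
  simp only [Perm.cycleType_eq_zero, eq_comm (a := (1 : Perm (Fin n)))]

theorem classSum_mem_center (m : Multiset ℕ) :
    classSum n m ∈ Subalgebra.center ℚ (MonoidAlgebra ℚ (Perm (Fin n))) := by
  rw [Subalgebra.mem_center_iff]
  intro b
  induction b using MonoidAlgebra.induction_on with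
  | of g =>
    ext ρ
    have : (g⁻¹ * ρ).cycleType = (ρ * g⁻¹).cycleType := by
      rw [← Perm.cycleType_conj (τ := g), mul_inv_cancel_left]
    simp [classSum_coeff, this]
  | add f g hf hg => rw [add_mul, mul_add, hf, hg]
  | smul r f hf => rw [smul_mul_assoc, mul_smul_comm, hf]

section Center

variable {x : MonoidAlgebra ℚ (Perm (Fin n))}

theorem mem_of_mem_center_of_classSum_mem (p : Submodule ℚ (MonoidAlgebra ℚ (Perm (Fin n))))
    (hx : x ∈ Subalgebra.center ℚ _) (h : ∀ ρ, x.coeff ρ ≠ 0 → classSum n ρ.cycleType ∈ p) :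
    x ∈ p := by
  classical
  rw [← univ_sum_coeff_smul_single x, ← sum_fiberwise_of_maps_to (g := Perm.cycleType)
    (t := univ.image Perm.cycleType) fun ρ _ => mem_image_of_mem _ (mem_univ ρ)]
  refine sum_mem fun m hm => ?_
  obtain ⟨ρ, -, rfl⟩ := mem_image.mp hm
  have hfiber : ∑ σ with σ.cycleType = ρ.cycleType, x.coeff σ • single σ (1 : ℚ) =
      x.coeff ρ • classSum n ρ.cycleType := by
    rw [classSum, smul_sum]
    exact sum_congr rfl fun σ hσ => by rw [coeff_eq_of_cycleType_eq hx (mem_filter.mp hσ).2]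
  rw [hfiber]
  by_cases h0 : x.coeff ρ = 0
  · simp [h0]
  · exact p.smul_mem _ (h ρ h0)

theorem classSum_mem_of_coeff_ne_zero (p : Submodule ℚ (MonoidAlgebra ℚ (Perm (Fin n))))
    (hxp : x ∈ p) (hx : x ∈ Subalgebra.center ℚ _) {g : Perm (Fin n)} (hg : x.coeff g ≠ 0)
    (h : ∀ ρ, x.coeff ρ ≠ 0 → ρ.cycleType ≠ g.cycleType → classSum n ρ.cycleType ∈ p) :
    classSum n g.cycleType ∈ p := by
  set y := x - x.coeff g • classSum n g.cycleType
  have hy : y ∈ p := by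
    refine mem_of_mem_center_of_classSum_mem p
      (sub_mem hx (Subalgebra.smul_mem _ (classSum_mem_center _) _)) fun ρ hρ => ?_
    by_cases hρg : ρ.cycleType = g.cycleType
    · simp [y, classSum_coeff, hρg, coeff_eq_of_cycleType_eq hx hρg] at hρ
    · have hyρ : y.coeff ρ = x.coeff ρ := by simp [y, classSum_coeff, hρg]
      exact h ρ (hyρ ▸ hρ) hρg
  have hsolve : classSum n g.cycleType = (x.coeff g)⁻¹ • (x - y) := by
    simp [y, smul_smul, hg]
  rw [hsolve]
  exact p.smul_mem _ (p.sub_mem hxp hy)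

end Center

theorem coeff_classSum_mul_classSum_ne_zero_iff {m₁ m₂ : Multiset ℕ} {ρ : Perm (Fin n)} :
    (classSum n m₁ * classSum n m₂).coeff ρ ≠ 0 ↔
      ∃ σ τ : Perm (Fin n), σ.cycleType = m₁ ∧ τ.cycleType = m₂ ∧ σ * τ = ρ := by
  classical
  rw [classSum, sum_mul, coeff_sum, Finsupp.finsetSum_apply]
  simp only [coeff_single_mul_apply, classSum_coeff, one_mul, sum_boole, Nat.cast_ne_zero,
    card_ne_zero, filter_nonempty_iff, mem_filter, mem_univ, true_and]
  constructor
  · rintro ⟨σ, hσ, hτ⟩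
    exact ⟨σ, σ⁻¹ * ρ, hσ, hτ, mul_inv_cancel_left σ ρ⟩
  · rintro ⟨σ, τ, hσ, hτ, rfl⟩
    exact ⟨σ, hσ, by rwa [inv_mul_cancel_left]⟩

section Subalgebra

variable (A : Subalgebra ℚ (MonoidAlgebra ℚ (Perm (Fin n))))

theorem classSum_cycleType_mul_mem {σ τ : Perm (Fin n)} (hσ : classSum n σ.cycleType ∈ A)
    (hτ : classSum n τ.cycleType ∈ A)
    (h : ∀ σ' τ' : Perm (Fin n), σ'.cycleType = σ.cycleType → τ'.cycleType = τ.cycleType →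
      (σ' * τ').cycleType ≠ (σ * τ).cycleType → classSum n (σ' * τ').cycleType ∈ A) :
    classSum n (σ * τ).cycleType ∈ A :=
  classSum_mem_of_coeff_ne_zero (x := classSum n σ.cycleType * classSum n τ.cycleType)
    (Subalgebra.toSubmodule A) (A.mul_mem hσ hτ)
    (mul_mem (classSum_mem_center _) (classSum_mem_center _))
    (coeff_classSum_mul_classSum_ne_zero_iff.mpr ⟨σ, τ, rfl, rfl, rfl⟩) fun ρ hρ hne => by
      obtain ⟨σ', τ', hσ', hτ', rfl⟩ := coeff_classSum_mul_classSum_ne_zero_iff.mp hρ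
      exact h σ' τ' hσ' hτ' hne

theorem classSum_cycleType_mem_of_not_isCycle {g : Perm (Fin n)} (h1 : g ≠ 1) (hg : ¬ g.IsCycle)
    (ih : ∀ ρ : Perm (Fin n), #ρ.support < #g.support → classSum n ρ.cycleType ∈ A) :
    classSum n g.cycleType ∈ A := by
  obtain ⟨f, h, hfh, hf1, hh1, rfl⟩ := Perm.exists_disjoint_mul_eq_of_not_isCycle h1 hg
  have hcard := hfh.card_support_mul
  have hf : 0 < #f.support := card_pos.mpr (nonempty_iff_ne_empty.mpr (by simpa using hf1))
  have hh : 0 < #h.support := card_pos.mpr (nonempty_iff_ne_empty.mpr (by simpa using hh1))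
  refine classSum_cycleType_mul_mem A (ih f (by omega)) (ih h (by omega))
    fun σ τ hσ hτ hne => ih _ ?_
  have hd : ¬ σ.Disjoint τ := fun hd => hne (by rw [hd.cycleType_mul, hfh.cycleType_mul, hσ, hτ])
  have hσf : #σ.support = #f.support := by rw [← Perm.sum_cycleType, hσ, Perm.sum_cycleType]
  have hτh : #τ.support = #h.support := by rw [← Perm.sum_cycleType, hτ, Perm.sum_cycleType]
  have := Perm.card_support_mul_lt_of_not_disjoint hd
  omega

theorem classSum_cycleType_mem_of_isCycle {g : Perm (Fin n)} (hg : g.IsCycle)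
    (h3 : 3 ≤ #g.support) (h2 : classSum n {2} ∈ A) (hpred : classSum n {#g.support - 1} ∈ A)
    (hpair : #g.support < n → classSum n {#g.support - 1, 2} ∈ A)
    (ih : ∀ ρ : Perm (Fin n), #ρ.support < #g.support → classSum n ρ.cycleType ∈ A) :
    classSum n g.cycleType ∈ A := by
  obtain ⟨σ, τ, hσ, hτ, rfl⟩ := hg.exists_swap_mul_eq h3
  refine classSum_cycleType_mul_mem A (hσ ▸ h2) (hτ ▸ hpred) fun σ' τ' hσ' hτ' hne => ?_
  have hσ'card : #σ'.support = 2 := by rw [← Perm.sum_cycleType, hσ', hσ, Multiset.sum_singleton]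
  have hτ'card : #τ'.support = #(σ * τ).support - 1 := by
    rw [← Perm.sum_cycleType, hτ', hτ, Multiset.sum_singleton]
  have hτ'cycle : τ'.IsCycle := Perm.card_cycleType_eq_one.mp (by rw [hτ', hτ]; rfl)
  rcases (Perm.card_support_eq_two.mp hσ'card).disjoint_or_cycleType_mul_or_card_support_mul_le
    hτ'cycle with hd | htype | hle
  · have hlt : #(σ * τ).support < n := by
      have := hd.card_support_mul
      have := card_le_univ (σ' * τ').support
      simp only [Fintype.card_fin] at this
      omega
    rw [hd.cycleType_mul, hσ', hσ, hτ', hτ, add_comm]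
    exact hpair hlt
  · exact absurd (by rw [htype, hτ'card, Nat.sub_add_cancel (by omega), hg.cycleType]) hne
  · exact ih _ (by omega)

end Subalgebra

def classSumGenerators (n ℓ : ℕ) : Set (MonoidAlgebra ℚ (Perm (Fin n))) :=
  {x | (∃ i, 1 ≤ i ∧ i ≤ n ∧ ¬ ℓ ∣ i ∧ x = cycleSum n i) ∨
    (∃ j, 1 ≤ j ∧ 1 < ℓ * j ∧ ℓ * j < n ∧ x = classSum n {ℓ * j - 1, 2})}

section Generators

variable {ℓ : ℕ}

theorem classSum_singleton_mem_adjoin {i : ℕ} (hi : 2 ≤ i) (hin : i ≤ n) (hdvd : ¬ ℓ ∣ i) :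
    classSum n {i} ∈ Algebra.adjoin ℚ (classSumGenerators n ℓ) :=
  Algebra.subset_adjoin <| .inl ⟨i, by omega, hin, hdvd, by rw [cycleSum, if_neg (by omega)]⟩

theorem classSum_pair_mem_adjoin {a : ℕ} (hdvd : ℓ ∣ a) (ha : 1 < a) (han : a < n) :
    classSum n {a - 1, 2} ∈ Algebra.adjoin ℚ (classSumGenerators n ℓ) := by
  obtain ⟨j, rfl⟩ := hdvd
  have hj : 1 ≤ j := Nat.pos_of_ne_zero (by rintro rfl; simp at ha)
  exact Algebra.subset_adjoin <| .inr ⟨j, hj, ha, han, rfl⟩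

theorem classSum_cycleType_mem_adjoin (hℓ : 2 < ℓ) (g : Perm (Fin n)) :
    classSum n g.cycleType ∈ Algebra.adjoin ℚ (classSumGenerators n ℓ) := by
  induction hk : #g.support using Nat.strong_induction_on generalizing g with
  | _ k ih =>
    have ih' : ∀ ρ : Perm (Fin n), #ρ.support < #g.support →
        classSum n ρ.cycleType ∈ Algebra.adjoin ℚ (classSumGenerators n ℓ) :=
      fun ρ hρ => ih _ (hk ▸ hρ) ρ rfl
    by_cases h1 : g = 1
    · rw [h1, Perm.cycleType_one, classSum_zero]
      exact one_mem _
    by_cases hg : g.IsCycle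
    swap
    · exact classSum_cycleType_mem_of_not_isCycle _ h1 hg ih'
    have hn : #g.support ≤ n := by simpa using card_le_univ g.support
    have h2 : 2 ≤ #g.support := hg.two_le_card_support
    by_cases hdvd : ℓ ∣ #g.support
    · have h3 : 3 ≤ #g.support := hℓ.trans_le (Nat.le_of_dvd (by omega) hdvd)
      refine classSum_cycleType_mem_of_isCycle _ hg h3 ?_ ?_
        (classSum_pair_mem_adjoin hdvd (by omega)) ih'
      · exact classSum_singleton_mem_adjoin le_rfl (by omega) fun h =>
          absurd (Nat.le_of_dvd two_pos h) (by omega)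
      · refine classSum_singleton_mem_adjoin (by omega) (by omega) fun h => ?_
        have hℓ1 : ℓ ∣ #g.support - (#g.support - 1) := Nat.dvd_sub hdvd h
        rw [Nat.sub_sub_self (by omega), Nat.dvd_one] at hℓ1
        omega
    · rw [hg.cycleType]
      exact classSum_singleton_mem_adjoin h2 hn hdvd

end Generators

/-- For `ℓ > 2`, the class sums
`X_ℓ(n) = {sᵢ : 1 ≤ i ≤ n, ℓ ∤ i} ∪ {s_{(ℓj−1,2)} : 1 < ℓj < n}` generate the
center of `ℚ[Sₙ]` as a ℚ-algebra. -/
theorem adjoin_X_eq_center (n ℓ : ℕ) (hℓ : 2 < ℓ) :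
    Algebra.adjoin ℚ {x : MonoidAlgebra ℚ (Equiv.Perm (Fin n)) |
        (∃ i, 1 ≤ i ∧ i ≤ n ∧ ¬ ℓ ∣ i ∧ x = cycleSum n i) ∨
        (∃ j, 1 ≤ j ∧ 1 < ℓ * j ∧ ℓ * j < n ∧ x = classSum n {ℓ * j - 1, 2})} =
      Subalgebra.center ℚ (MonoidAlgebra ℚ (Equiv.Perm (Fin n))) := by
  refine le_antisymm (Algebra.adjoin_le ?_) fun x hx => ?_
  · rintro x (⟨i, -, -, -, rfl⟩ | ⟨j, -, -, -, rfl⟩)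
    · unfold cycleSum
      split_ifs
      exacts [one_mem _, classSum_mem_center _]
    · exact classSum_mem_center _
  · exact mem_of_mem_center_of_classSum_mem
      (Subalgebra.toSubmodule (Algebra.adjoin ℚ (classSumGenerators n ℓ))) hx
      fun ρ _ => classSum_cycleType_mem_adjoin hℓ ρ
end

section
/- Let n, k, l be natural numbers with k, l ≥ 3 and k + l ≤ n + 2, and work in the group algebra ℚ[S_n]. Suppose σ ∈ S_n moves at least k + l − 2 points and the coefficient of σ in the product s_k · s_l is nonzero. Then one of the following holds: σ has cycle type (a, b, 1^{n−a−b}) for some a, b ≥ 2 with a + b = k + l − 2; or k + l − 1 ≤ n and σ is a (k+l−1)-cycle; or k + l ≤ n and σ has cycle type (k, l, 1^{n−k−l}). -/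
/-!
Write `σ = π * τ` with `π` a `k`-cycle and `τ` an `l`-cycle; disjoint supports give cycle type
`(k, l)`. An orbit of `π * τ` that avoids `supp π ∩ supp τ` is invariant under `π` (and,
applying this to `(π * τ)⁻¹ = τ⁻¹ * π⁻¹`, under `τ`), so when the supports overlap every cycle of `π * τ` meets the overlap. If the overlap
has `m ≥ 1` points, `π * τ` thus has at most `m` cycles and moves at most `k + l - m` points.
Moving at least `k + l - 2` points leaves one or two cycles, and a single `(k + l - 2)`-cycle has
the wrong sign.
-/

open Finset

namespace Equiv.Perm

variable {α : Type*} [Fintype α] [DecidableEq α] {f g : Perm α} {x z : α}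

theorem cycleType_eq_singleton_iff {k : ℕ} : f.cycleType = {k} ↔ f.IsCycle ∧ #f.support = k :=
  ⟨fun h => ⟨card_cycleType_eq_one.1 (by rw [h]; rfl),
      by rw [← sum_cycleType, h, Multiset.sum_singleton]⟩,
    fun ⟨hf, hk⟩ => hk ▸ hf.cycleType⟩

theorem sameCycle_mul_apply_left (hS : ∀ y ∈ f.support ∩ g.support, ¬(f * g).SameCycle z y)
    {w : α} (hw : (f * g).SameCycle z w) : (f * g).SameCycle z (f w) := by
  by_cases hwf : w ∈ f.support
  · have hwg : w ∉ g.support := fun hwg => hS w (mem_inter.2 ⟨hwf, hwg⟩) hw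
    have hfw : (f * g) w = f w := by rw [mul_apply, notMem_support.1 hwg]
    exact hfw ▸ sameCycle_apply_right.2 hw
  · rwa [notMem_support.1 hwf]

theorem SameCycle.mul_of_forall_not_sameCycle
    (hS : ∀ y ∈ f.support ∩ g.support, ¬(f * g).SameCycle z y) {w : α} (h : f.SameCycle z w) :
    (f * g).SameCycle z w := by
  obtain ⟨i, -, rfl⟩ := h.exists_pow_eq'
  clear h
  induction i with
  | zero => exact SameCycle.refl _ _
  | succ i ih => rw [pow_succ', mul_apply]; exact sameCycle_mul_apply_left hS ih

theorem IsCycle.exists_mem_inter_sameCycle_mul (hf : f.IsCycle) (hg : g.IsCycle)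
    (hx : x ∈ f.support ∩ g.support) (hz : z ∈ f.support ∪ g.support) :
    ∃ y ∈ f.support ∩ g.support, (f * g).SameCycle z y := by
  by_contra! hS
  obtain ⟨hxf, hxg⟩ := mem_inter.1 hx
  rcases mem_union.1 hz with hzf | hzg
  · exact hS x hx <|
      (hf.sameCycle (mem_support.1 hzf) (mem_support.1 hxf)).mul_of_forall_not_sameCycle hS
  · have hS' : ∀ y ∈ g⁻¹.support ∩ f⁻¹.support, ¬(g⁻¹ * f⁻¹).SameCycle z y := by
      simpa [← mul_inv_rev, sameCycle_inv, inter_comm] using hS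
    have hzx : g⁻¹.SameCycle z x :=
      hg.inv.sameCycle (mem_support.1 (by rwa [support_inv])) (mem_support.1 (by rwa [support_inv]))
    exact hS x hx (by simpa [← mul_inv_rev, sameCycle_inv] using hzx.mul_of_forall_not_sameCycle hS')

theorem IsCycle.card_cycleFactorsFinset_mul_le (hf : f.IsCycle) (hg : g.IsCycle)
    (hfg : (f.support ∩ g.support).Nonempty) :
    #(f * g).cycleFactorsFinset ≤ #(f.support ∩ g.support) := by
  obtain ⟨x, hx⟩ := hfg
  refine card_le_card_of_forall_subsingleton (fun c y => y ∈ c.support) (fun c hc => ?_)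
    fun y _ c₁ hc₁ c₂ hc₂ =>
      (cycle_is_cycleOf hc₁.2 hc₁.1).trans (cycle_is_cycleOf hc₂.2 hc₂.1).symm
  obtain ⟨z, hz⟩ := (mem_cycleFactorsFinset_iff.1 hc).1.nonempty_support
  have hzfg : z ∈ (f * g).support := mem_cycleFactorsFinset_support_le hc hz
  obtain ⟨y, hy, hzy⟩ := hf.exists_mem_inter_sameCycle_mul hg hx (support_mul_le f g hzfg)
  exact ⟨y, hy, cycle_is_cycleOf hz hc ▸ mem_support_cycleOf_iff.2 ⟨hzy, hzfg⟩⟩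

theorem IsCycle.card_cycleType_mul_add_card_support_mul_le (hf : f.IsCycle) (hg : g.IsCycle)
    (hfg : (f.support ∩ g.support).Nonempty) :
    Multiset.card (f * g).cycleType + #(f * g).support ≤ #f.support + #g.support := by
  have hcycles := hf.card_cycleFactorsFinset_mul_le hg hfg
  have hsupport : #(f * g).support ≤ #(f.support ∪ g.support) :=
    card_le_card (support_mul_le f g)
  rw [cycleType_def, Multiset.card_map, ← card_def, ← card_union_add_card_inter]
  omega

theorem IsCycle.card_support_mul_add_two_ne (hf : f.IsCycle) (hg : g.IsCycle)
    (hfg : (f * g).IsCycle) : #(f * g).support + 2 ≠ #f.support + #g.support := by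
  intro h
  have hsign := hfg.sign
  rw [sign_mul, hf.sign, hg.sign, neg_mul_neg, ← pow_add, ← h, pow_add, neg_one_sq, mul_one]
    at hsign
  exact units_ne_neg_self (R := ℤ) _ hsign

end Equiv.Perm

open Equiv Perm

theorem coeff_classSum (n : ℕ) (m : Multiset ℕ) (ρ : Perm (Fin n)) :
    (classSum n m).coeff ρ = if ρ.cycleType = m then 1 else 0 := by
  simp only [classSum, MonoidAlgebra.coeff_sum, MonoidAlgebra.coeff_single,
    Finsupp.coe_finsetSum, Finset.sum_apply, Finsupp.single_apply, Finset.sum_ite_eq',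
    mem_filter, mem_univ, true_and]

theorem exists_mul_eq_of_coeff_classSum_mul_ne_zero {n : ℕ} {m₁ m₂ : Multiset ℕ}
    {σ : Perm (Fin n)} (h : (classSum n m₁ * classSum n m₂).coeff σ ≠ 0) :
    ∃ π τ : Perm (Fin n), π.cycleType = m₁ ∧ τ.cycleType = m₂ ∧ π * τ = σ := by
  obtain ⟨π, hπ, τ, hτ, rfl⟩ :=
    mem_mul.1 (MonoidAlgebra.support_coeff_mul_subset _ _ (Finsupp.mem_support_iff.2 h))
  simp only [Finsupp.mem_support_iff, coeff_classSum, ne_eq, ite_eq_right_iff, one_ne_zero,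
    imp_false, not_not] at hπ hτ
  exact ⟨π, τ, hπ, hτ, rfl⟩

theorem cycleType_of_coeff_ne_zero_general (n k l : ℕ) (σ : Equiv.Perm (Fin n))
    (hsupp : k + l - 2 ≤ σ.support.card)
    (hcoeff : (classSum n {k} * classSum n {l}).coeff σ ≠ 0) :
    (∃ a b, 2 ≤ a ∧ 2 ≤ b ∧ a + b = k + l - 2 ∧ σ.cycleType = {a, b}) ∨
    (k + l - 1 ≤ n ∧ σ.cycleType = {k + l - 1}) ∨
    (k + l ≤ n ∧ σ.cycleType = {k, l}) := by
  obtain ⟨π, τ, hπ, hτ, rfl⟩ := exists_mul_eq_of_coeff_classSum_mul_ne_zero hcoeff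
  obtain ⟨hπc, rfl⟩ := cycleType_eq_singleton_iff.1 hπ
  obtain ⟨hτc, rfl⟩ := cycleType_eq_singleton_iff.1 hτ
  have hle_n (s : Finset (Fin n)) : #s ≤ n := (card_le_univ s).trans_eq (Fintype.card_fin n)
  by_cases hdisj : Disjoint π.support τ.support
  · refine Or.inr (Or.inr ⟨(card_union_of_disjoint hdisj).symm.trans_le (hle_n _), ?_⟩)
    rw [(disjoint_iff_disjoint_support.2 hdisj).cycleType_mul, hπ, hτ]
    rfl
  have hcard := hπc.card_cycleType_mul_add_card_support_mul_le hτc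
    (not_disjoint_iff_nonempty_inter.1 hdisj)
  have hsum := sum_cycleType (π * τ)
  have hk := hπc.two_le_card_support
  have hl := hτc.two_le_card_support
  obtain h0 | h1 | h2 : Multiset.card (π * τ).cycleType = 0 ∨
      Multiset.card (π * τ).cycleType = 1 ∨ Multiset.card (π * τ).cycleType = 2 := by omega
  · rw [Multiset.card_eq_zero.1 h0, Multiset.sum_zero] at hsum
    omega
  · have hσc := card_cycleType_eq_one.1 h1
    have hsign := hπc.card_support_mul_add_two_ne hτc hσc
    have := hle_n (π * τ).support
    exact Or.inr (Or.inl ⟨by omega, cycleType_eq_singleton_iff.2 ⟨hσc, by omega⟩⟩)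
  · obtain ⟨a, b, hab⟩ := Multiset.card_eq_two.1 h2
    rw [hab, Multiset.sum_pair] at hsum
    have ha : a ∈ (π * τ).cycleType := by simp [hab]
    have hb : b ∈ (π * τ).cycleType := by simp [hab]
    exact Or.inl ⟨a, b, two_le_of_mem_cycleType ha, two_le_of_mem_cycleType hb, by omega, hab⟩

/-- Let `k, l ≥ 3` with `k + l ≤ n + 2`.  If `σ ∈ Sₙ` moves
at least `k + l − 2` points and the coefficient of `σ` in `s_k · s_l` is
nonzero, then either `σ` has cycle type `(a, b, 1^{n−a−b})` for some
`a, b ≥ 2` with `a + b = k + l − 2`, or `k + l − 1 ≤ n` and `σ` is a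
`(k+l−1)`-cycle, or `k + l ≤ n` and `σ` has cycle type `(k, l, 1^{n−k−l})`. -/
theorem cycleType_of_coeff_ne_zero (n k l : ℕ) (hk : 3 ≤ k) (hl : 3 ≤ l)
    (hn : k + l ≤ n + 2) (σ : Equiv.Perm (Fin n))
    (hsupp : k + l - 2 ≤ σ.support.card)
    (hcoeff : (classSum n {k} * classSum n {l}).coeff σ ≠ 0) :
    (∃ a b, 2 ≤ a ∧ 2 ≤ b ∧ a + b = k + l - 2 ∧ σ.cycleType = {a, b}) ∨
    (k + l - 1 ≤ n ∧ σ.cycleType = {k + l - 1}) ∨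
    (k + l ≤ n ∧ σ.cycleType = {k, l}) :=
  cycleType_of_coeff_ne_zero_general n k l σ hsupp hcoeff
end
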